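/- arXiv:2207.04769 — 3 statements merged into one kernel-verified Lean document; each statement's English description precedes it below -/
import Mathlib

section
/- Let D, Ω ⊆ ℂ be open, ℘ : Ω → ℝ smooth and positive, and let f : D → Ω be a C², sense-preserving, ℘-harmonic diffeomorphism of D onto Ω. Suppose ψ : D → ℂ is holomorphic with ℘(f(z))²·f_z(z)·conj(f_{z̄}(z)) = −ψ(z)² for all z ∈ D, and that ψ has a holomorphic antiderivative Φ on D (Φ' = ψ). Then the function ω : Ω → ℝ defined by ω(w) = 2·Re(Φ(f⁻¹(w))) is C² and satisfies the ℘-minimal surface equation div(∇ω / √(1 + |∇ω|²/℘²)) = 0 on Ω; that is, the graph of ω is a minimal graph in (Ω,℘) × ℝ and f furnishes its conformal parameters. -/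
open Complex Metric MeasureTheory

/-- Wirtinger derivative ∂f/∂z = (f_x - i f_y)/2. -/
noncomputable def wz (f : ℂ → ℂ) (z : ℂ) : ℂ :=
  (fderiv ℝ f z 1 - Complex.I * fderiv ℝ f z Complex.I) / 2

/-- Wirtinger derivative ∂f/∂z̄ = (f_x + i f_y)/2. -/
noncomputable def wzbar (f : ℂ → ℂ) (z : ℂ) : ℂ :=
  (fderiv ℝ f z 1 + Complex.I * fderiv ℝ f z Complex.I) / 2

/-- Euclidean Laplacian of a real-valued function on ℂ. -/
noncomputable def lap (u : ℂ → ℝ) (z : ℂ) : ℝ :=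
  fderiv ℝ (fun w => fderiv ℝ u w 1) z 1 +
  fderiv ℝ (fun w => fderiv ℝ u w Complex.I) z Complex.I

/-- ∂_w u = (u_x - i u_y)/2 for a real-valued u, as a complex number. -/
noncomputable def dw (u : ℂ → ℝ) (w : ℂ) : ℂ :=
  ((fderiv ℝ u w 1 : ℝ) - Complex.I * (fderiv ℝ u w Complex.I : ℝ)) / 2

/-- f is ℘-harmonic on D: f_{zz̄} + 2 (∂_w log ℘)∘f · f_z · f_{z̄} = 0. -/
def PHarmOn (p : ℂ → ℝ) (f : ℂ → ℂ) (D : Set ℂ) : Prop :=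
  ∀ z ∈ D,
    wzbar (fun w => wz f w) z
      + 2 * dw (fun w => Real.log (p w)) (f z) * wz f z * wzbar f z = 0

/-- |∇u|² for a real-valued u on ℂ. -/
noncomputable def gradSq (u : ℂ → ℝ) (w : ℂ) : ℝ :=
  (fderiv ℝ u w 1) ^ 2 + (fderiv ℝ u w Complex.I) ^ 2

/-- The ℘-minimal surface equation div(∇ω/√(1+|∇ω|²/℘²)) = 0 on Ω. -/
def MinSurfEq (p : ℂ → ℝ) (ω : ℂ → ℝ) (Ω : Set ℂ) : Prop :=
  ∀ w ∈ Ω,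
    fderiv ℝ (fun v => fderiv ℝ ω v 1 / Real.sqrt (1 + gradSq ω v / (p v) ^ 2)) w 1 +
    fderiv ℝ (fun v => fderiv ℝ ω v Complex.I / Real.sqrt (1 + gradSq ω v / (p v) ^ 2)) w
      Complex.I = 0

/-- The annulus {z : r < |z| < R}. -/
def Ann (r R : ℝ) : Set ℂ := {z : ℂ | r < ‖z‖ ∧ ‖z‖ < R}

/- ### Auxiliary lemmas -/

lemma stmt1_clm_decomp (L : ℂ →L[ℝ] ℂ) (v : ℂ) : L v = v.re • L 1 + v.im • L Complex.I := by
  conv_lhs => rw [show v = v.re • (1:ℂ) + v.im • Complex.I by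
    simp [Complex.real_smul, Complex.re_add_im]]
  rw [map_add, _root_.map_smul, _root_.map_smul]

lemma stmt1_clm_decomp' (L : ℂ →L[ℝ] ℝ) (v : ℂ) : L v = v.re • L 1 + v.im • L Complex.I := by
  conv_lhs => rw [show v = v.re • (1:ℂ) + v.im • Complex.I by
    simp [Complex.real_smul, Complex.re_add_im]]
  rw [map_add, _root_.map_smul, _root_.map_smul]

lemma stmt1_fderiv_wirt (F : ℂ → ℂ) (z v : ℂ) :
    fderiv ℝ F z v = wz F z * v + wzbar F z * (starRingEnd ℂ) v := by
  rw [stmt1_clm_decomp (fderiv ℝ F z) v, wz, wzbar]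
  apply Complex.ext <;>
    simp [Complex.mul_re, Complex.mul_im, Complex.add_re, Complex.add_im,
      Complex.div_re, Complex.div_im, Complex.normSq] <;> ring

lemma stmt1_fderiv_wirt_real (u : ℂ → ℝ) (w v : ℂ) :
    fderiv ℝ u w v = (2 * dw u w * v).re := by
  rw [stmt1_clm_decomp' (fderiv ℝ u w) v, dw]
  simp [Complex.mul_re, Complex.mul_im, Complex.div_re, Complex.div_im, Complex.normSq]
  ring

lemma stmt1_chain_re (u : ℂ → ℝ) (F : ℂ → ℂ) (Φ : ℂ → ℂ) (z : ℂ) (ψ₀ : ℂ)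
    (hu : DifferentiableAt ℝ u (F z)) (hF : DifferentiableAt ℝ F z)
    (hev : (fun ζ => u (F ζ)) =ᶠ[nhds z] (fun ζ => 2 * (Φ ζ).re))
    (hΦ : HasDerivAt Φ ψ₀ z) :
    ∀ v : ℂ, fderiv ℝ u (F z) (fderiv ℝ F z v) = 2 * (ψ₀ * v).re := by
  intro v
  have hΦ' : HasFDerivAt Φ (((1 : ℂ →L[ℂ] ℂ).smulRight ψ₀).restrictScalars ℝ) z :=
    (hΦ.hasFDerivAt).restrictScalars ℝ
  have hre0 := (((2:ℝ) • Complex.reCLM).hasFDerivAt (x := Φ z)).comp z hΦ'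
  have hre : HasFDerivAt (fun ζ => 2 * (Φ ζ).re)
      (((2:ℝ) • Complex.reCLM).comp
        (((1 : ℂ →L[ℂ] ℂ).smulRight ψ₀).restrictScalars ℝ)) z := by
    simpa [Function.comp_def, Pi.smul_apply, smul_eq_mul] using hre0
  have hcomp : fderiv ℝ (fun ζ => u (F ζ)) z = (fderiv ℝ u (F z)).comp (fderiv ℝ F z) :=
    fderiv_comp z hu hF
  have e1 : fderiv ℝ (fun ζ => u (F ζ)) z = fderiv ℝ (fun ζ => 2 * (Φ ζ).re) z :=
    hev.fderiv_eq
  have e2 := congrArg (fun (L : ℂ →L[ℝ] ℝ) => L v) (hcomp.symm.trans e1)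
  simp only [ContinuousLinearMap.comp_apply] at e2
  rw [hre.fderiv] at e2
  simpa [smul_eq_mul, Complex.smul_re, mul_comm] using e2

lemma stmt1_chain_im (u : ℂ → ℝ) (F : ℂ → ℂ) (Φ : ℂ → ℂ) (z : ℂ) (ψ₀ : ℂ)
    (hu : DifferentiableAt ℝ u (F z)) (hF : DifferentiableAt ℝ F z)
    (hev : (fun ζ => u (F ζ)) =ᶠ[nhds z] (fun ζ => 2 * (Φ ζ).im))
    (hΦ : HasDerivAt Φ ψ₀ z) :
    ∀ v : ℂ, fderiv ℝ u (F z) (fderiv ℝ F z v) = 2 * (ψ₀ * v).im := by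
  intro v
  have hΦ' : HasFDerivAt Φ (((1 : ℂ →L[ℂ] ℂ).smulRight ψ₀).restrictScalars ℝ) z :=
    (hΦ.hasFDerivAt).restrictScalars ℝ
  have hre0 := (((2:ℝ) • Complex.imCLM).hasFDerivAt (x := Φ z)).comp z hΦ'
  have hre : HasFDerivAt (fun ζ => 2 * (Φ ζ).im)
      (((2:ℝ) • Complex.imCLM).comp
        (((1 : ℂ →L[ℂ] ℂ).smulRight ψ₀).restrictScalars ℝ)) z := by
    simpa [Function.comp_def, Pi.smul_apply, smul_eq_mul] using hre0
  have hcomp : fderiv ℝ (fun ζ => u (F ζ)) z = (fderiv ℝ u (F z)).comp (fderiv ℝ F z) :=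
    fderiv_comp z hu hF
  have e1 : fderiv ℝ (fun ζ => u (F ζ)) z = fderiv ℝ (fun ζ => 2 * (Φ ζ).im) z :=
    hev.fderiv_eq
  have e2 := congrArg (fun (L : ℂ →L[ℝ] ℝ) => L v) (hcomp.symm.trans e1)
  simp only [ContinuousLinearMap.comp_apply] at e2
  rw [hre.fderiv] at e2
  simpa [smul_eq_mul, Complex.smul_im, mul_comm] using e2

lemma stmt1_extract (a b c χ : ℂ)
    (q1 : (2 * a * (b * 1 + c * (starRingEnd ℂ) 1)).re = 2 * (χ * 1).re)
    (q2 : (2 * a * (b * Complex.I + c * (starRingEnd ℂ) Complex.I)).re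
       = 2 * (χ * Complex.I).re) :
    a * b + (starRingEnd ℂ) a * (starRingEnd ℂ) c = χ := by
  simp only [map_one, mul_one, Complex.mul_re, Complex.mul_im, Complex.add_re, Complex.add_im,
    Complex.conj_re, Complex.conj_im, Complex.I_re, Complex.I_im, Complex.one_re,
    Complex.one_im, Complex.re_ofNat, Complex.im_ofNat] at q1 q2 ⊢
  rw [Complex.ext_iff]
  ring_nf at q1 q2
  constructor <;>
    simp [Complex.add_re, Complex.add_im, Complex.mul_re, Complex.mul_im,
      Complex.conj_re, Complex.conj_im] <;> ring_nf <;> linarith [q1, q2]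

lemma stmt1_core (a β b c ψ₀ : ℂ) (P B C : ℝ) (hP : 0 < P)
    (hB : B = ‖b‖) (hC : C = ‖c‖) (hBC : C < B)
    (hhopf : (P:ℂ)^2 * b * (starRingEnd ℂ) c = -ψ₀^2)
    (hstar : a * b + (starRingEnd ℂ) a * (starRingEnd ℂ) c = ψ₀)
    (hbeta : β * b + (starRingEnd ℂ) β * (starRingEnd ℂ) c = -Complex.I * ψ₀) :
    Real.sqrt (1 + 4 * Complex.normSq a / P^2) = (B+C)/(B-C) ∧
    a = Complex.I * β * (((B+C)/(B-C) : ℝ) : ℂ) := by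
  have hC0 : 0 ≤ C := hC ▸ norm_nonneg c
  have hBpos : 0 < B := lt_of_le_of_lt hC0 hBC
  have hBC' : 0 < B - C := by linarith
  have hBCp : 0 < B + C := by linarith
  have hbB : b * (starRingEnd ℂ) b = ((B^2 : ℝ) : ℂ) := by
    rw [hB, Complex.mul_conj, Complex.sq_norm]
  have hcC : c * (starRingEnd ℂ) c = ((C^2 : ℝ) : ℂ) := by
    rw [hC, Complex.mul_conj, Complex.sq_norm]
  push_cast at hbB hcC
  have hconj : (P:ℂ)^2 * (starRingEnd ℂ) b * c = -((starRingEnd ℂ) ψ₀)^2 := by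
    have := congrArg (starRingEnd ℂ) hhopf
    simpa [map_mul, map_pow, map_neg, Complex.conj_ofReal] using this
  have hψψ : ψ₀ * (starRingEnd ℂ) ψ₀ = ((P^2*B*C : ℝ) : ℂ) := by
    have habs := congrArg (‖·‖) hhopf
    simp only [norm_mul, norm_pow, norm_neg, Complex.norm_real, Real.norm_eq_abs,
      Complex.norm_conj] at habs
    rw [abs_of_pos hP] at habs
    rw [Complex.mul_conj]
    norm_cast
    rw [← Complex.sq_norm, ← habs, hB, hC]
  push_cast at hψψ
  -- the key sign identity (†)
  have htick : (B:ℂ) * (starRingEnd ℂ) ψ₀ * (starRingEnd ℂ) c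
      + (C:ℂ) * ψ₀ * (starRingEnd ℂ) b = 0 := by
    set X := (B:ℂ) * (starRingEnd ℂ) ψ₀ * (starRingEnd ℂ) c with hX
    set Y := (C:ℂ) * ψ₀ * (starRingEnd ℂ) b with hY
    have hsum : (X + Y) * (starRingEnd ℂ) (X + Y) = 0 := by
      rw [hX, hY]
      simp only [map_add, map_mul, Complex.conj_conj, Complex.conj_ofReal]
      linear_combination ((B:ℂ)^2*(starRingEnd ℂ) c*c + (C:ℂ)^2*(starRingEnd ℂ) b*b) * hψψ
        + ((B:ℂ)*(C:ℂ)*(starRingEnd ℂ) c*b) * hconj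
        + ((B:ℂ)*(C:ℂ)*(starRingEnd ℂ) b*c) * hhopf
        + (2*(P:ℂ)^2*(B:ℂ)*(C:ℂ)*c*(starRingEnd ℂ) c - (P:ℂ)^2*(B:ℂ)*(C:ℂ)^3) * hbB
        + ((P:ℂ)^2*(B:ℂ)^3*(C:ℂ)) * hcC
        + (-2*(P:ℂ)^2*(B:ℂ)*(C:ℂ)^3
            - 4*(P:ℂ)^2*(B:ℂ)*(C:ℂ)*(c*(starRingEnd ℂ) c - (C:ℂ)^2)) * hbB
        + (-2*(P:ℂ)^2*(B:ℂ)^3*(C:ℂ)) * hcC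
    have h0 : Complex.normSq (X + Y) = 0 := by
      have h2 := Complex.mul_conj (X + Y)
      rw [hsum] at h2
      exact_mod_cast h2.symm
    have := Complex.normSq_eq_zero.mp h0
    linear_combination this
  have hstar' : (starRingEnd ℂ) a * (starRingEnd ℂ) b + a * c = (starRingEnd ℂ) ψ₀ := by
    have := congrArg (starRingEnd ℂ) hstar
    simpa [map_add, map_mul, Complex.conj_conj] using this
  have hbeta' : (starRingEnd ℂ) β * (starRingEnd ℂ) b + β * c
      = Complex.I * (starRingEnd ℂ) ψ₀ := by
    have := congrArg (starRingEnd ℂ) hbeta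
    simpa [map_add, map_mul, map_neg, Complex.conj_conj, Complex.conj_I] using this
  set j : ℝ := B^2 - C^2 with hjdef
  have hj : 0 < j := by nlinarith
  have hjC : ((j:ℝ):ℂ) ≠ 0 := by exact_mod_cast hj.ne'
  have haj : a * ((j:ℝ):ℂ)
      = ψ₀ * (starRingEnd ℂ) b - (starRingEnd ℂ) ψ₀ * (starRingEnd ℂ) c := by
    rw [hjdef]; push_cast
    linear_combination ((starRingEnd ℂ) b) * hstar - ((starRingEnd ℂ) c) * hstar'
      - a * hbB + a * hcC
  have hβj : β * ((j:ℝ):ℂ) = -Complex.I * (ψ₀ * (starRingEnd ℂ) b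
      + (starRingEnd ℂ) ψ₀ * (starRingEnd ℂ) c) := by
    rw [hjdef]; push_cast
    linear_combination ((starRingEnd ℂ) b) * hbeta - ((starRingEnd ℂ) c) * hbeta'
      - β * hbB + β * hcC
  have hNN : a * ((j:ℝ):ℂ) * (starRingEnd ℂ) (a * ((j:ℝ):ℂ))
      = ((P^2*B*C*(B+C)^2 : ℝ) : ℂ) := by
    rw [haj]
    rw [map_sub]
    simp only [map_mul, Complex.conj_conj]
    push_cast
    linear_combination (b * (starRingEnd ℂ) b + c * (starRingEnd ℂ) c) * hψψ
      - ((starRingEnd ℂ) b * c) * hhopf - (b * (starRingEnd ℂ) c) * hconj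
      + ((P:ℂ)^2*(B:ℂ)*(C:ℂ) + 2*(P:ℂ)^2*c*(starRingEnd ℂ) c) * hbB
      + ((P:ℂ)^2*(B:ℂ)*(C:ℂ) + 2*(P:ℂ)^2*(B:ℂ)^2) * hcC
  have hna : Complex.normSq a * j^2 = P^2*B*C*(B+C)^2 := by
    have h2 : ((Complex.normSq a * j^2 : ℝ) : ℂ) = ((P^2*B*C*(B+C)^2 : ℝ) : ℂ) := by
      rw [← hNN, map_mul, Complex.conj_ofReal]
      push_cast
      rw [← Complex.mul_conj]
      ring
    exact_mod_cast h2
  constructor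
  · have harg : 1 + 4 * Complex.normSq a / P^2 = ((B+C)/(B-C))^2 := by
      have hj2 : j = (B-C)*(B+C) := by rw [hjdef]; ring
      have hns : Complex.normSq a = P^2*B*C*(B+C)^2/j^2 := by
        field_simp at hna ⊢
        linarith [hna]
      rw [hns, hj2]
      field_simp
      ring
    rw [harg, Real.sqrt_sq (by positivity)]
  · have hmain : a * ((j:ℝ):ℂ) * (((B-C : ℝ)):ℂ)
        = Complex.I * β * ((j:ℝ):ℂ) * (((B+C : ℝ)):ℂ) := by
      push_cast
      linear_combination ((B:ℂ)-(C:ℂ)) * haj - Complex.I*((B:ℂ)+(C:ℂ)) * hβj - 2 * htick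
        + (((B:ℂ)+(C:ℂ))*(ψ₀*(starRingEnd ℂ) b
            + (starRingEnd ℂ) ψ₀*(starRingEnd ℂ) c)) * Complex.I_sq
    have hBC0 : (((B-C : ℝ)):ℂ) ≠ 0 := by exact_mod_cast hBC'.ne'
    have h3 : (a * (((B-C:ℝ)):ℂ)) * ((j:ℝ):ℂ)
        = (Complex.I*β*(((B+C:ℝ)):ℂ)) * ((j:ℝ):ℂ) := by
      linear_combination hmain
    have h4 := mul_right_cancel₀ hjC h3
    have h2 : (((B+C)/(B-C):ℝ):ℂ) = (((B+C:ℝ)):ℂ) / (((B-C:ℝ)):ℂ) := by push_cast; ring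
    rw [h2, mul_div_assoc', eq_div_iff hBC0]
    linear_combination h4

/-- if f is a sense-preserving ℘-harmonic diffeomorphism of D onto Ω whose
Hopf differential is -ψ² with ψ = Φ' holomorphic, then ω = 2 Re(Φ∘f⁻¹) is C² and solves
the ℘-minimal surface equation on Ω. -/
theorem stmt1 (D Ω : Set ℂ) (hD : IsOpen D) (hΩ : IsOpen Ω) (p : ℂ → ℝ)
    (hps : ContDiffOn ℝ (⊤ : ℕ∞) p Ω) (hpp : ∀ w ∈ Ω, 0 < p w)
    (f g : ℂ → ℂ) (hf : ContDiffOn ℝ 2 f D)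
    (hbij : Set.BijOn f D Ω)
    (hg : ∀ z ∈ D, g (f z) = z) (hg' : ∀ w ∈ Ω, f (g w) = w)
    (hgd : ContDiffOn ℝ 2 g Ω)
    (hsp : ∀ z ∈ D, ‖wzbar f z‖ < ‖wz f z‖)
    (hharm : PHarmOn p f D)
    (ψ Φ : ℂ → ℂ) (hψ : DifferentiableOn ℂ ψ D)
    (hΦ : ∀ z ∈ D, HasDerivAt Φ (ψ z) z)
    (hhopf : ∀ z ∈ D,
      (p (f z) : ℂ) ^ 2 * wz f z * (starRingEnd ℂ) (wzbar f z) = -(ψ z) ^ 2)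
    (ω : ℂ → ℝ) (hω : ∀ w ∈ Ω, ω w = 2 * (Φ (g w)).re) :
    ContDiffOn ℝ 2 ω Ω ∧ MinSurfEq p ω Ω := by
  have hgD : ∀ w ∈ Ω, g w ∈ D := by
    intro w hw
    obtain ⟨z, hz, rfl⟩ := hbij.surjOn hw
    rw [hg z hz]; exact hz
  have hΦd : DifferentiableOn ℂ Φ D := fun z hz =>
    (hΦ z hz).differentiableAt.differentiableWithinAt
  have hΦc : ContDiffOn ℝ 2 Φ D := (hΦd.contDiffOn hD).restrict_scalars ℝ
  have hcomp : ContDiffOn ℝ 2 (Φ ∘ g) Ω := hΦc.comp hgd hgD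
  have homega : ContDiffOn ℝ 2 (fun w => 2 * (Φ (g w)).re) Ω :=
    contDiffOn_const.mul (Complex.reCLM.contDiff.comp_contDiffOn hcomp)
  have hωC : ContDiffOn ℝ 2 ω Ω := homega.congr hω
  set σ : ℂ → ℝ := fun w => 2 * (Φ (g w)).im with hσdef
  have hσC : ContDiffOn ℝ 2 σ Ω :=
    contDiffOn_const.mul (Complex.imCLM.contDiff.comp_contDiffOn hcomp)
  -- the key pointwise identities
  have key : ∀ w ∈ Ω,
      fderiv ℝ ω w 1 / Real.sqrt (1 + gradSq ω w / (p w)^2) = fderiv ℝ σ w Complex.I ∧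
      fderiv ℝ ω w Complex.I / Real.sqrt (1 + gradSq ω w / (p w)^2)
        = -(fderiv ℝ σ w 1) := by
    intro w hw
    have hz : g w ∈ D := hgD w hw
    have hfz : f (g w) = w := hg' w hw
    set z := g w with hzdef
    have hzD : D ∈ nhds z := hD.mem_nhds hz
    have hwΩ : Ω ∈ nhds w := hΩ.mem_nhds hw
    have hfd : DifferentiableAt ℝ f z := (hf.contDiffAt hzD).differentiableAt two_ne_zero
    have hωd : DifferentiableAt ℝ ω (f z) := by
      rw [hfz]; exact (hωC.contDiffAt hwΩ).differentiableAt two_ne_zero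
    have hσd : DifferentiableAt ℝ σ (f z) := by
      rw [hfz]; exact (hσC.contDiffAt hwΩ).differentiableAt two_ne_zero
    have hev1 : (fun ζ => ω (f ζ)) =ᶠ[nhds z] (fun ζ => 2 * (Φ ζ).re) := by
      filter_upwards [hzD] with ζ hζ
      rw [hω (f ζ) (hbij.mapsTo hζ), hg ζ hζ]
    have hev2 : (fun ζ => σ (f ζ)) =ᶠ[nhds z] (fun ζ => 2 * (Φ ζ).im) := by
      filter_upwards [hzD] with ζ hζ
      simp only [hσdef]
      rw [hg ζ hζ]
    have hch1 := stmt1_chain_re ω f Φ z (ψ z) hωd hfd hev1 (hΦ z hz)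
    have hch2 := stmt1_chain_im σ f Φ z (ψ z) hσd hfd hev2 (hΦ z hz)
    rw [hfz] at hch1 hch2
    have him : ∀ v : ℂ, 2 * (ψ z * v).im = 2 * ((-Complex.I * ψ z) * v).re := by
      intro v
      simp only [Complex.mul_re, Complex.mul_im, Complex.neg_re, Complex.neg_im,
        Complex.I_re, Complex.I_im]
      ring
    have hstar : dw ω w * wz f z
        + (starRingEnd ℂ) (dw ω w) * (starRingEnd ℂ) (wzbar f z) = ψ z := by
      apply stmt1_extract
      · have := hch1 1
        rw [stmt1_fderiv_wirt f z 1, stmt1_fderiv_wirt_real ω w] at this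
        exact this
      · have := hch1 Complex.I
        rw [stmt1_fderiv_wirt f z Complex.I, stmt1_fderiv_wirt_real ω w] at this
        exact this
    have hbeta : dw σ w * wz f z
        + (starRingEnd ℂ) (dw σ w) * (starRingEnd ℂ) (wzbar f z) = -Complex.I * ψ z := by
      apply stmt1_extract
      · have := hch2 1
        rw [stmt1_fderiv_wirt f z 1, stmt1_fderiv_wirt_real σ w, him 1] at this
        exact this
      · have := hch2 Complex.I
        rw [stmt1_fderiv_wirt f z Complex.I, stmt1_fderiv_wirt_real σ w,
          him Complex.I] at this
        exact this
    have hP : 0 < p w := hpp w hw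
    have hhopf' : ((p w : ℝ):ℂ)^2 * wz f z * (starRingEnd ℂ) (wzbar f z) = -(ψ z)^2 := by
      have := hhopf z hz
      rw [hfz] at this
      exact this
    obtain ⟨hW, hfinal⟩ := stmt1_core (dw ω w) (dw σ w) (wz f z) (wzbar f z) (ψ z)
      (p w) (‖wz f z‖) (‖wzbar f z‖) hP rfl rfl (hsp z hz)
      hhopf' hstar hbeta
    set a := dw ω w
    set β := dw σ w
    set B := ‖wz f z‖
    set C := ‖wzbar f z‖
    set r : ℝ := (B + C) / (B - C) with hrdef
    have hC0 : 0 ≤ C := norm_nonneg _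
    have hBC : C < B := hsp z hz
    have hBC' : 0 < B - C := by linarith
    have hBCp : 0 < B + C := by linarith
    have hR : 0 < (B + C) / (B - C) := by positivity
    have hgrad : gradSq ω w = 4 * Complex.normSq a := by
      simp only [gradSq]
      rw [stmt1_fderiv_wirt_real ω w 1, stmt1_fderiv_wirt_real ω w Complex.I]
      simp [Complex.mul_re, Complex.mul_im, Complex.normSq_apply]
      ring
    have hRne : r ≠ 0 := ne_of_gt hR
    have hre : a.re = -β.im * r := by
      rw [hfinal]
      simp [Complex.mul_re, Complex.mul_im]
    have him2 : a.im = β.re * r := by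
      rw [hfinal]
      simp [Complex.mul_re, Complex.mul_im]
    have e1 : (2 * a * 1 : ℂ).re = 2 * a.re := by simp
    have e2 : (2 * β * Complex.I : ℂ).re = -2 * β.im := by
      simp [Complex.mul_re]
    have e3 : (2 * a * Complex.I : ℂ).re = -2 * a.im := by
      simp [Complex.mul_re]
    have e4 : (2 * β * 1 : ℂ).re = 2 * β.re := by simp
    constructor
    · rw [stmt1_fderiv_wirt_real ω w 1, stmt1_fderiv_wirt_real σ w Complex.I,
        hgrad, hW, e1, e2, hre]
      field_simp
    · rw [stmt1_fderiv_wirt_real ω w Complex.I, stmt1_fderiv_wirt_real σ w 1,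
        hgrad, hW, e3, e4, him2]
      field_simp
  refine ⟨hωC, ?_⟩
  intro w hw
  have hwΩ : Ω ∈ nhds w := hΩ.mem_nhds hw
  have hσ2 : ContDiffAt ℝ 2 σ w := hσC.contDiffAt hwΩ
  have hsym : IsSymmSndFDerivAt ℝ σ w := hσ2.isSymmSndFDerivAt (by norm_num)
  have hd1 : DifferentiableAt ℝ (fderiv ℝ σ) w :=
    (hσ2.fderiv_right (m := 1) (by norm_num)).differentiableAt (by norm_num)
  have hEq1 : (fun v => fderiv ℝ ω v 1 / Real.sqrt (1 + gradSq ω v / (p v) ^ 2))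
      =ᶠ[nhds w] (fun v => fderiv ℝ σ v Complex.I) := by
    filter_upwards [hwΩ] with v hv
    exact (key v hv).1
  have hEq2 : (fun v => fderiv ℝ ω v Complex.I / Real.sqrt (1 + gradSq ω v / (p v) ^ 2))
      =ᶠ[nhds w] (fun v => -(fderiv ℝ σ v 1)) := by
    filter_upwards [hwΩ] with v hv
    exact (key v hv).2
  rw [hEq1.fderiv_eq, hEq2.fderiv_eq]
  have hA : fderiv ℝ (fun v => fderiv ℝ σ v Complex.I) w
      = (fderiv ℝ (fderiv ℝ σ) w).flip Complex.I := by
    rw [fderiv_clm_apply hd1 (differentiableAt_const _)]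
    simp
  have hB : fderiv ℝ (fun v => -(fderiv ℝ σ v 1)) w
      = -((fderiv ℝ (fderiv ℝ σ) w).flip 1) := by
    rw [fderiv_fun_neg, fderiv_clm_apply hd1 (differentiableAt_const _)]
    simp
  rw [hA, hB]
  simp only [ContinuousLinearMap.flip_apply, ContinuousLinearMap.neg_apply]
  rw [hsym.eq 1 Complex.I]
  ring
end

section
/- Let R > 1, d > 0, h₀ ∈ ℝ, and let Ω ⊆ ℂ be open. Let u : Ω → ℝ be C², let f : A(1/R,R) → Ω be a Euclidean harmonic (f_{zz̄} = 0) homeomorphism of A(1/R,R) onto Ω, and set h = u ∘ f. Assume: (i) h is harmonic (Δh = 0) on A(1/R,R); (ii) χ(z) = (f(z), h(z)) : A(1/R,R) → ℝ² × ℝ is conformal, i.e. |f_x|² + h_x² = |f_y|² + h_y² and ⟨f_x, f_y⟩ + h_x·h_y = 0 on A(1/R,R) (here f_x, f_y ∈ ℂ ≅ ℝ²); (iii) h extends continuously to the closed annulus with h ≡ h₀ on |z| = 1/R and h ≡ h₀ + d on |z| = R. Then h(z) = h₀ + d/2 + (d/log R²)·log|z| for all z, and f_z(z)·conj(f_{z̄}(z))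 = c/z² with c = −d²/(4·(log R²)²) < 0; moreover u(w) = h₀ + d/2 + 2√(−c)·log|f⁻¹(w)| for all w ∈ Ω. -/
/-! The height h = u ∘ f is harmonic on the annulus and constant on each boundary circle, so by
the maximum principle it is the harmonic function h₀ + d/2 + a log|z| with the same boundary
values. Conformality of (f, h) says exactly that the Hopf differential f_z·conj(f_z̄) equals
-(h_z)², and h_z = a/(2z) for this h. -/

open Complex Metric MeasureTheory

open InnerProductSpace Laplacian Topology ComplexConjugate

theorem laplacian_eq_lap {u : ℂ → ℝ} {z : ℂ} (hu : ContDiffAt ℝ 2 u z) : Δ u z = lap u z := by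
  have hd : DifferentiableAt ℝ (fderiv ℝ u) z :=
    (hu.fderiv_right (m := 1) (by norm_num)).differentiableAt one_ne_zero
  simp [laplacian_eq_iteratedFDeriv_complexPlane, iteratedFDeriv_two_apply, lap,
    fderiv_clm_apply hd (differentiableAt_const _)]

theorem harmonicOnNhd_of_lap_eq_zero {u : ℂ → ℝ} {s : Set ℂ} (hs : IsOpen s)
    (hu : ContDiffOn ℝ 2 u s) (hlap : ∀ z ∈ s, lap u z = 0) : HarmonicOnNhd u s := by
  intro z hz
  refine ⟨hu.contDiffAt (hs.mem_nhds hz), ?_⟩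
  filter_upwards [hs.mem_nhds hz] with w hw
  rw [laplacian_eq_lap (hu.contDiffAt (hs.mem_nhds hw)), hlap w hw, Pi.zero_apply]

theorem InnerProductSpace.HarmonicAt.eventually_eq_of_isLocalMax {f : ℂ → ℝ} {w : ℂ}
    (hf : HarmonicAt f w) (hmax : IsLocalMax f w) : ∀ᶠ z in 𝓝 w, f z = f w := by
  -- near w, f = re F with F holomorphic, and ‖exp F‖ = exp f has a local maximum at w
  obtain ⟨r, hr, hball⟩ := Metric.isOpen_iff.1 (isOpen_setOfPred_harmonicAt f) w hf
  obtain ⟨F, hF, hFre⟩ := HarmonicOnNhd.exists_analyticOnNhd_ball_re_eq (f := f) hball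
  have hmaxF : IsLocalMax (fun z => ‖Complex.exp (F z)‖) w := by
    filter_upwards [hmax, Metric.ball_mem_nhds w hr] with z hz hzb
    simp only [Complex.norm_exp]
    rw [Real.exp_le_exp]
    simpa only [← hFre hzb, ← hFre (Metric.mem_ball_self hr)] using hz
  have hd : ∀ᶠ z in 𝓝 w, DifferentiableAt ℂ (fun z => Complex.exp (F z)) z := by
    filter_upwards [Metric.ball_mem_nhds w hr] with z hz
    exact ((hF z hz).differentiableAt).cexp
  filter_upwards [Complex.norm_eventually_eq_of_isLocalMax hd hmaxF, Metric.ball_mem_nhds w hr]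
    with z hz hzb
  simp only [Complex.norm_exp] at hz
  simpa only [← hFre hzb, ← hFre (Metric.mem_ball_self hr)] using Real.exp_injective hz

theorem InnerProductSpace.HarmonicContOnCl.le_of_forall_mem_frontier_le {f : ℂ → ℝ} {U : Set ℂ}
    (hU : Bornology.IsBounded U) (hf : HarmonicContOnCl f U) {C : ℝ}
    (hC : ∀ z ∈ frontier U, f z ≤ C) : ∀ z ∈ closure U, f z ≤ C := by
  rcases (closure U).eq_empty_or_nonempty with hempty | hne
  · simp [hempty]
  have hK : IsCompact (closure U) := hU.isCompact_closure
  obtain ⟨z₀, hz₀, hmax⟩ := hK.exists_isMaxOn hne hf.continuousOn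
  -- among the maximum points, one with largest real part must lie on the frontier
  set S := closure U ∩ f ⁻¹' {f z₀}
  have hS : IsCompact S := hK.of_isClosed_subset
    (hf.continuousOn.preimage_isClosed_of_isClosed isClosed_closure isClosed_singleton)
    Set.inter_subset_left
  obtain ⟨w, ⟨hwU, hw⟩, hwmax⟩ := hS.exists_isMaxOn ⟨z₀, hz₀, rfl⟩ continuous_re.continuousOn
  suffices hwf : w ∈ frontier U by
    intro z hz
    exact (hmax hz).trans (hw ▸ hC w hwf)
  by_contra hwf
  have hwU' : U ∈ 𝓝 w := mem_interior_iff_mem_nhds.1 (by_contra fun h => hwf ⟨hwU, h⟩)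
  have hloc : IsLocalMax f w := by
    filter_upwards [hwU'] with z hz
    exact hw ▸ hmax (subset_closure hz)
  have heq :=
    HarmonicAt.eventually_eq_of_isLocalMax (hf.harmonicOnNhd w (mem_of_mem_nhds hwU')) hloc
  have hshift : Filter.Tendsto (fun t : ℝ => w + t) (𝓝[>] 0) (𝓝 w) := by
    refine ((continuous_const.add continuous_ofReal).tendsto' 0 w (by simp)).mono_left
      nhdsWithin_le_nhds
  obtain ⟨t, ⟨hteq, htU⟩, ht⟩ :=
    ((hshift.eventually (heq.and hwU')).and self_mem_nhdsWithin).exists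
  have hre : (w + t).re ≤ w.re := hwmax ⟨subset_closure htU, hteq.trans hw⟩
  rw [add_re, ofReal_re] at hre
  linarith

theorem InnerProductSpace.HarmonicContOnCl.eqOn_closure_of_eqOn_frontier {f g : ℂ → ℝ}
    {U : Set ℂ} (hU : Bornology.IsBounded U) (hf : HarmonicContOnCl f U)
    (hg : HarmonicContOnCl g U) (hfg : Set.EqOn f g (frontier U)) :
    Set.EqOn f g (closure U) := fun z hz =>
  le_antisymm
    (sub_nonpos.1 ((hf.sub hg).le_of_forall_mem_frontier_le hU
      (fun _ hw => (sub_eq_zero.2 (hfg hw)).le) z hz))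
    (sub_nonpos.1 ((hg.sub hf).le_of_forall_mem_frontier_le hU
      (fun _ hw => (sub_eq_zero.2 (hfg hw).symm).le) z hz))

theorem harmonicOnNhd_const_add_mul_log_norm (c a : ℝ) :
    HarmonicOnNhd (fun w : ℂ => c + a * Real.log ‖w‖) {0}ᶜ := fun _ hz =>
  (harmonicAt_const c).add
    (HarmonicAt.const_smul (c := a) (analyticAt_id.harmonicAt_log_norm hz))

theorem isOpen_Ann (r R : ℝ) : IsOpen (Ann r R) :=
  isOpen_Ioo.preimage continuous_norm

theorem isBounded_Ann (r R : ℝ) : Bornology.IsBounded (Ann r R) :=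
  (isBounded_ball (x := 0) (r := R)).subset fun z hz => by simpa using hz.2

theorem closure_Ann_subset (r R : ℝ) : closure (Ann r R) ⊆ {z : ℂ | r ≤ ‖z‖ ∧ ‖z‖ ≤ R} :=
  closure_minimal (fun _ hz => ⟨hz.1.le, hz.2.le⟩) (isClosed_Icc.preimage continuous_norm)

theorem frontier_Ann_subset (r R : ℝ) : frontier (Ann r R) ⊆ {z : ℂ | ‖z‖ = r ∨ ‖z‖ = R} := by
  rw [(isOpen_Ann r R).frontier_eq]
  rintro z ⟨hz, hzA⟩
  obtain ⟨h1, h2⟩ := closure_Ann_subset r R hz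
  by_contra! h
  exact hzA ⟨h1.lt_of_ne fun h' => h (Or.inl h'.symm), h2.lt_of_ne fun h' => h (Or.inr h')⟩

theorem eqOn_Ann_const_add_mul_log_norm {r R c a : ℝ} (hr : 0 < r) {H : ℂ → ℝ}
    (hH : HarmonicContOnCl H (Ann r R)) (hin : ∀ z : ℂ, ‖z‖ = r → H z = c + a * Real.log r)
    (hout : ∀ z : ℂ, ‖z‖ = R → H z = c + a * Real.log R) :
    Set.EqOn H (fun z => c + a * Real.log ‖z‖) (Ann r R) := by
  have hρ : HarmonicContOnCl (fun z : ℂ => c + a * Real.log ‖z‖) (Ann r R) :=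
    ((harmonicOnNhd_const_add_mul_log_norm c a).mono fun z hz (h0 : z = 0) =>
      hr.not_ge (by simpa [h0] using (closure_Ann_subset r R hz).1)).harmonicContOnCl
  refine (hH.eqOn_closure_of_eqOn_frontier (isBounded_Ann r R) hρ ?_).mono subset_closure
  intro z hz
  rcases frontier_Ann_subset r R hz with h | h
  · simp only [hin z h, h]
  · simp only [hout z h, h]

theorem hasFDerivAt_log_norm {z : ℂ} (hz : z ≠ 0) :
    HasFDerivAt (fun w : ℂ => Real.log ‖w‖) ((‖z‖ ^ 2)⁻¹ • innerSL ℝ z) z := by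
  have h := ((hasFDerivAt_id z).norm_sq.log (by simpa using hz)).const_mul (2⁻¹ : ℝ)
  refine (h.congr_of_eventuallyEq (Filter.Eventually.of_forall fun w => ?_)).congr_fderiv ?_
  · simp [Real.log_pow]
  · ext v; simp; ring

theorem dw_const_add_mul_log_norm (c a : ℝ) {z : ℂ} (hz : z ≠ 0) :
    dw (fun w => c + a * Real.log ‖w‖) z = a / (2 * z) := by
  have h := ((hasFDerivAt_log_norm hz).const_mul a).const_add c
  have hn : (normSq z : ℂ) ≠ 0 := by simpa using hz
  rw [dw, h.fderiv, div_eq_div_iff two_ne_zero (mul_ne_zero two_ne_zero hz)]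
  simp only [smul_apply, innerSL_apply_apply, smul_eq_mul, ← normSq_eq_norm_sq, Complex.inner]
  push_cast
  field_simp
  have hconj : ((conj z).re : ℂ) - I * ((conj z * I).re : ℝ) = conj z := by
    apply Complex.ext <;> simp
  rw [hconj, mul_assoc, normSq_eq_conj_mul_self]

theorem wz_mul_conj_wzbar_of_conformal {f : ℂ → ℂ} {h : ℂ → ℝ} {z : ℂ}
    (h1 : ‖fderiv ℝ f z 1‖ ^ 2 + (fderiv ℝ h z 1) ^ 2 =
      ‖fderiv ℝ f z I‖ ^ 2 + (fderiv ℝ h z I) ^ 2)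
    (h2 : (fderiv ℝ f z 1 * conj (fderiv ℝ f z I)).re +
      fderiv ℝ h z 1 * fderiv ℝ h z I = 0) :
    wz f z * conj (wzbar f z) = -dw h z ^ 2 := by
  rw [wz, wzbar, dw]
  generalize fderiv ℝ f z 1 = A at *
  generalize fderiv ℝ f z I = B at *
  generalize fderiv ℝ h z 1 = p at *
  generalize fderiv ℝ h z I = q at *
  rw [Complex.sq_norm, Complex.sq_norm, Complex.normSq_apply, Complex.normSq_apply] at h1
  simp only [Complex.mul_re, Complex.conj_re, Complex.conj_im] at h2
  have hexpand : (A - I * B) / 2 * conj ((A + I * B) / 2) =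
      (A - I * B) * (conj A - I * conj B) / 4 := by
    simp only [map_div₀, map_add, map_mul, conj_I, map_ofNat]; ring
  rw [hexpand]
  apply Complex.ext <;> simp [Complex.mul_re, Complex.mul_im, pow_two]
  · linear_combination (1/4:ℝ) * h1
  · linear_combination (-1/2:ℝ) * h2

theorem stmt5_general (R d h₀ : ℝ) (hR : 1 < R) (hd : 0 < d) (Ω : Set ℂ)
    (u : ℂ → ℝ) (hu : ContDiffOn ℝ 2 u Ω)
    (f g : ℂ → ℂ) (hf : ContDiffOn ℝ 2 f (Ann (1/R) R))
    (hbij : Set.BijOn f (Ann (1/R) R) Ω)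
    (hg : ∀ z ∈ Ann (1/R) R, g (f z) = z)
    (hlap : ∀ z ∈ Ann (1/R) R, lap (fun w => u (f w)) z = 0)
    (hconf1 : ∀ z ∈ Ann (1/R) R,
      ‖fderiv ℝ f z 1‖ ^ 2 + (fderiv ℝ (fun w => u (f w)) z 1) ^ 2 =
      ‖fderiv ℝ f z Complex.I‖ ^ 2 +
        (fderiv ℝ (fun w => u (f w)) z Complex.I) ^ 2)
    (hconf2 : ∀ z ∈ Ann (1/R) R,
      (fderiv ℝ f z 1 * (starRingEnd ℂ) (fderiv ℝ f z Complex.I)).re +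
      fderiv ℝ (fun w => u (f w)) z 1 * fderiv ℝ (fun w => u (f w)) z Complex.I = 0)
    (H : ℂ → ℝ)
    (hHcont : ContinuousOn H {z : ℂ | 1/R ≤ ‖z‖ ∧ ‖z‖ ≤ R})
    (hHeq : ∀ z ∈ Ann (1/R) R, H z = u (f z))
    (hHin : ∀ z : ℂ, ‖z‖ = 1/R → H z = h₀)
    (hHout : ∀ z : ℂ, ‖z‖ = R → H z = h₀ + d) :
    (∀ z ∈ Ann (1/R) R,
        u (f z) = h₀ + d / 2 + (d / Real.log (R ^ 2)) * Real.log (‖z‖)) ∧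
    (∀ z ∈ Ann (1/R) R,
        wz f z * (starRingEnd ℂ) (wzbar f z) =
          ((-d ^ 2 / (4 * (Real.log (R ^ 2)) ^ 2) : ℝ) : ℂ) / z ^ 2) ∧
    (-d ^ 2 / (4 * (Real.log (R ^ 2)) ^ 2) : ℝ) < 0 ∧
    (∀ w ∈ Ω, u w = h₀ + d / 2 +
        2 * Real.sqrt (-(-d ^ 2 / (4 * (Real.log (R ^ 2)) ^ 2))) *
          Real.log (‖g w‖)) := by
  have hlogR : 0 < Real.log R := Real.log_pos hR
  have hL : Real.log (R ^ 2) = 2 * Real.log R := by simp [Real.log_pow]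
  have hL0 : 0 < Real.log (R ^ 2) := by rw [hL]; positivity
  have hAnn := isOpen_Ann (1/R) R
  have hh : HarmonicOnNhd (fun w => u (f w)) (Ann (1/R) R) :=
    harmonicOnNhd_of_lap_eq_zero hAnn (hu.comp hf hbij.mapsTo) hlap
  have hH : HarmonicContOnCl H (Ann (1/R) R) :=
    ⟨fun z hz => (harmonicAt_congr_nhds (Filter.eventuallyEq_of_mem (hAnn.mem_nhds hz) hHeq)).2
      (hh z hz), hHcont.mono (closure_Ann_subset _ _)⟩
  have hheight : ∀ z ∈ Ann (1/R) R,
      u (f z) = h₀ + d / 2 + (d / Real.log (R ^ 2)) * Real.log (‖z‖) := by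
    refine fun z hz => (hHeq z hz).symm.trans
      (eqOn_Ann_const_add_mul_log_norm (by positivity) hH (fun z hz => ?_) (fun z hz => ?_) hz)
    · rw [hHin z hz, one_div, Real.log_inv, hL]; field_simp; ring
    · rw [hHout z hz, hL]; field_simp; ring
  refine ⟨hheight, fun z hz => ?_, div_neg_of_neg_of_pos (by nlinarith) (by positivity),
    fun w hw => ?_⟩
  · have hz0 : z ≠ 0 := norm_pos_iff.1 ((one_div_pos.2 (by linarith)).trans hz.1)
    have hdw : dw (fun w => u (f w)) z =
        dw (fun w => h₀ + d / 2 + d / Real.log (R ^ 2) * Real.log ‖w‖) z := by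
      rw [dw, dw,
        Filter.EventuallyEq.fderiv_eq (Filter.eventuallyEq_of_mem (hAnn.mem_nhds hz) hheight)]
    rw [wz_mul_conj_wzbar_of_conformal (hconf1 z hz) (hconf2 z hz), hdw,
      dw_const_add_mul_log_norm _ _ hz0]
    push_cast
    field_simp
    ring
  · obtain ⟨z, hz, rfl⟩ := hbij.surjOn hw
    have hsqrt :
        Real.sqrt (-(-d ^ 2 / (4 * Real.log (R ^ 2) ^ 2))) = d / (2 * Real.log (R ^ 2)) := by
      rw [show -(-d ^ 2 / (4 * Real.log (R ^ 2) ^ 2)) = (d / (2 * Real.log (R ^ 2))) ^ 2 by ring]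
      exact Real.sqrt_sq (by positivity)
    rw [hg z hz, hheight z hz, hsqrt]
    ring

/-- the height function of a conformally parametrized doubly connected
minimal graph between two parallel planes is h(z) = h₀ + d/2 + (d/log R²) log|z|, the
Hopf differential of f is c/z² with c = -d²/(4 (log R²)²) < 0, and
u(w) = h₀ + d/2 + 2√(-c) log|f⁻¹(w)|. -/
theorem stmt5 (R d h₀ : ℝ) (hR : 1 < R) (hd : 0 < d) (Ω : Set ℂ) (hΩ : IsOpen Ω)
    (u : ℂ → ℝ) (hu : ContDiffOn ℝ 2 u Ω)
    (f g : ℂ → ℂ) (hf : ContDiffOn ℝ 2 f (Ann (1/R) R))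
    (hfharm : ∀ z ∈ Ann (1/R) R, wzbar (fun w => wz f w) z = 0)
    (hbij : Set.BijOn f (Ann (1/R) R) Ω)
    (hfc : ContinuousOn f (Ann (1/R) R)) (hgc : ContinuousOn g Ω)
    (hg : ∀ z ∈ Ann (1/R) R, g (f z) = z) (hg' : ∀ w ∈ Ω, f (g w) = w)
    (hlap : ∀ z ∈ Ann (1/R) R, lap (fun w => u (f w)) z = 0)
    (hconf1 : ∀ z ∈ Ann (1/R) R,
      ‖fderiv ℝ f z 1‖ ^ 2 + (fderiv ℝ (fun w => u (f w)) z 1) ^ 2 =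
      ‖fderiv ℝ f z Complex.I‖ ^ 2 +
        (fderiv ℝ (fun w => u (f w)) z Complex.I) ^ 2)
    (hconf2 : ∀ z ∈ Ann (1/R) R,
      (fderiv ℝ f z 1 * (starRingEnd ℂ) (fderiv ℝ f z Complex.I)).re +
      fderiv ℝ (fun w => u (f w)) z 1 * fderiv ℝ (fun w => u (f w)) z Complex.I = 0)
    (H : ℂ → ℝ)
    (hHcont : ContinuousOn H {z : ℂ | 1/R ≤ ‖z‖ ∧ ‖z‖ ≤ R})
    (hHeq : ∀ z ∈ Ann (1/R) R, H z = u (f z))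
    (hHin : ∀ z : ℂ, ‖z‖ = 1/R → H z = h₀)
    (hHout : ∀ z : ℂ, ‖z‖ = R → H z = h₀ + d) :
    (∀ z ∈ Ann (1/R) R,
        u (f z) = h₀ + d / 2 + (d / Real.log (R ^ 2)) * Real.log (‖z‖)) ∧
    (∀ z ∈ Ann (1/R) R,
        wz f z * (starRingEnd ℂ) (wzbar f z) =
          ((-d ^ 2 / (4 * (Real.log (R ^ 2)) ^ 2) : ℝ) : ℂ) / z ^ 2) ∧
    (-d ^ 2 / (4 * (Real.log (R ^ 2)) ^ 2) : ℝ) < 0 ∧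
    (∀ w ∈ Ω, u w = h₀ + d / 2 +
        2 * Real.sqrt (-(-d ^ 2 / (4 * (Real.log (R ^ 2)) ^ 2))) *
          Real.log (‖g w‖)) :=
  stmt5_general R d h₀ hR hd Ω u hu f g hf hbij hg hlap hconf1 hconf2 H hHcont hHeq hHin hHout
end

section
/- Let R > 1, d > 0, h₀ ∈ ℝ, let Ω ⊆ ℂ be open, and let ℘ : Ω → ℝ be smooth and positive. Let u : Ω → ℝ be C², let f : A(1/R,R) → Ω be a ℘-harmonic homeomorphism of A(1/R,R) onto Ω, and set h = u ∘ f. Assume: (i) h is harmonic (Δh = 0) on A(1/R,R); (ii) χ(z) = (f(z), h(z)) is conformal with respect to the product metric dħ² = ℘²|dw|² + dt² on Ω × ℝ, i.e. ℘(f)²·|f_x|² + h_x² = ℘(f)²·|f_y|² + h_y² and ℘(f)²·⟨f_x, f_y⟩ + h_x·h_y = 0 on A(1/R,R); (iii) h extends continuously to the closed annulus with h ≡ h₀ on |z| = 1/R and h ≡ h₀ + d on |z| = R. Then h(z) = h₀ + d/2 + (d/log R²)·log|z| for all z, and ℘(f(z))²·f_z(z)·conj(f_{z̄}(z)) = c/z²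 with c = −d²/(4·(log R²)²) < 0; moreover u(w) = h₀ + d/2 + 2√(−c)·log|f⁻¹(w)| for all w ∈ Ω. -/
open Complex Metric MeasureTheory

open Filter Set Topology

section Aux

/-- 1D second derivative test: at an interior local max, the second derivative is ≤ 0. -/
lemma sd_test {g : ℝ → ℝ} (hdiff : ∀ᶠ t in nhds (0:ℝ), DifferentiableAt ℝ g t)
    (hmax : IsLocalMax g 0) {D : ℝ} (hD : HasDerivAt (deriv g) D 0) : D ≤ 0 := by
  by_contra hpos
  push_neg at hpos
  have h0 : deriv g 0 = 0 := hmax.deriv_eq_zero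
  have hslope : Tendsto (slope (deriv g) 0) (𝓝[≠] (0:ℝ)) (𝓝 D) :=
    hasDerivAt_iff_tendsto_slope.mp hD
  have hev : ∀ᶠ t in 𝓝[>] (0:ℝ), 0 < slope (deriv g) 0 t := by
    have : ∀ᶠ t in 𝓝[≠] (0:ℝ), 0 < slope (deriv g) 0 t :=
      hslope.eventually (eventually_gt_nhds hpos)
    exact this.filter_mono (nhdsWithin_mono 0 (fun t ht => ne_of_gt ht))
  have hev' : ∀ᶠ t in 𝓝[>] (0:ℝ), 0 < deriv g t := by
    filter_upwards [hev, self_mem_nhdsWithin] with t ht ht'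
    have ht'' : (0:ℝ) < t := ht'
    have : slope (deriv g) 0 t = deriv g t / t := by
      simp [slope, h0, div_eq_inv_mul]
    rw [this] at ht
    have := mul_pos ht ht''
    rwa [div_mul_cancel₀ _ (ne_of_gt ht'')] at this
  obtain ⟨δ, hδpos, hδ⟩ := (nhdsGT_basis (0:ℝ)).eventually_iff.mp hev'
  obtain ⟨s, hs, hsub⟩ := eventually_iff_exists_mem.mp
    (hdiff.and (hmax : ∀ᶠ t in nhds (0:ℝ), g t ≤ g 0))
  obtain ⟨ε, hεpos, hball⟩ := Metric.mem_nhds_iff.mp hs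
  set c := min δ ε / 2 with hc
  have hcpos : 0 < c := by positivity
  have hcδ : c < δ := by
    have := min_le_left δ ε; simp only [hc]; linarith
  have hcε : c < ε := by
    have := min_le_right δ ε; simp only [hc]; linarith
  have hIccball : Icc (0:ℝ) c ⊆ Metric.ball 0 ε := by
    intro t ht
    simp only [Metric.mem_ball, Real.dist_eq, sub_zero]
    rw [_root_.abs_of_nonneg ht.1]; linarith [ht.2]
  have hmono : StrictMonoOn g (Icc (0:ℝ) c) := by
    apply strictMonoOn_of_deriv_pos (convex_Icc 0 c)
    · intro t ht
      exact ((hsub t (hball (hIccball ht))).1).continuousAt.continuousWithinAt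
    · intro t ht
      rw [interior_Icc] at ht
      exact hδ ⟨ht.1, lt_trans ht.2 hcδ⟩
  have h1 : g 0 < g c := hmono ⟨le_refl 0, le_of_lt hcpos⟩ ⟨le_of_lt hcpos, le_refl c⟩ hcpos
  have h2 : g c ≤ g 0 := (hsub c (hball (hIccball ⟨le_of_lt hcpos, le_refl c⟩))).2
  linarith

lemma dir_second_nonpos {ψ : ℂ → ℝ} {U : Set ℂ} (hU : IsOpen U) {z₀ : ℂ} (hz : z₀ ∈ U)
    (hC : ContDiffOn ℝ 2 ψ U) (v : ℂ) (hmax : IsLocalMax ψ z₀) :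
    fderiv ℝ (fun w => fderiv ℝ ψ w v) z₀ v ≤ 0 := by
  set L : ℝ → ℂ := fun t => z₀ + t • v with hL
  have hL0 : L 0 = z₀ := by simp [hL]
  have hLd : ∀ t : ℝ, HasDerivAt L v t := by
    intro t
    simpa [hL] using ((hasDerivAt_id t).smul_const v).const_add z₀
  have hLc : Continuous L := by fun_prop
  have hUnb : ∀ᶠ t in nhds (0:ℝ), L t ∈ U := by
    have : Tendsto L (nhds 0) (nhds z₀) := by
      rw [← hL0]; exact hLc.continuousAt
    exact this.eventually (hU.eventually_mem hz)
  set g : ℝ → ℝ := fun t => ψ (L t) with hg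
  have hCat : ∀ w ∈ U, ContDiffAt ℝ 2 ψ w := fun w hw => hC.contDiffAt (hU.mem_nhds hw)
  have hea : ∀ᶠ t in nhds (0:ℝ), HasDerivAt g (fderiv ℝ ψ (L t) v) t := by
    filter_upwards [hUnb] with t ht
    have hψ : HasFDerivAt ψ (fderiv ℝ ψ (L t)) (L t) :=
      (((hCat _ ht).differentiableAt (by norm_num)).hasFDerivAt)
    exact hψ.comp_hasDerivAt t (hLd t)
  have hdiff : ∀ᶠ t in nhds (0:ℝ), DifferentiableAt ℝ g t := by
    filter_upwards [hea] with t ht; exact ht.differentiableAt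
  have hder : deriv g =ᶠ[nhds (0:ℝ)] fun t => fderiv ℝ ψ (L t) v := by
    filter_upwards [hea] with t ht; exact ht.deriv
  have hΦ : ContDiffOn ℝ 1 (fun w => fderiv ℝ ψ w) U := hC.fderiv_of_isOpen hU (by norm_num)
  have hΦv : DifferentiableAt ℝ (fun w => fderiv ℝ ψ w v) z₀ := by
    exact ((hΦ.contDiffAt (hU.mem_nhds hz)).differentiableAt one_ne_zero).clm_apply
      (differentiableAt_const v)
  have hD2 : HasDerivAt (fun t => fderiv ℝ ψ (L t) v)
      (fderiv ℝ (fun w => fderiv ℝ ψ w v) z₀ v) 0 := by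
    have h1 : HasFDerivAt (fun w => fderiv ℝ ψ w v)
        (fderiv ℝ (fun w => fderiv ℝ ψ w v) z₀) (L 0) := by
      rw [hL0]; exact hΦv.hasFDerivAt
    exact h1.comp_hasDerivAt 0 (hLd 0)
  have hDg : HasDerivAt (deriv g) (fderiv ℝ (fun w => fderiv ℝ ψ w v) z₀ v) 0 :=
    hD2.congr_of_eventuallyEq hder
  have hgmax : IsLocalMax g 0 := by
    have hT : Tendsto L (nhds 0) (nhds z₀) := by rw [← hL0]; exact hLc.continuousAt
    have := hT.eventually hmax
    simpa [hg, IsLocalMax, IsMaxFilter, hL0] using this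
  exact sd_test hdiff hgmax hDg

noncomputable def Dq (z : ℂ) : ℂ →L[ℝ] ℝ :=
  (2*z.re) • Complex.reCLM + (2*z.im) • Complex.imCLM

lemma hasFDerivAt_q (z : ℂ) : HasFDerivAt Complex.normSq (Dq z) z := by
  have h1 : HasFDerivAt (fun w : ℂ => w.re * w.re + w.im * w.im)
      ((z.re • (Complex.reCLM : ℂ →L[ℝ] ℝ) + z.re • Complex.reCLM) +
       (z.im • (Complex.imCLM : ℂ →L[ℝ] ℝ) + z.im • Complex.imCLM)) z :=
    (Complex.reCLM.hasFDerivAt.mul Complex.reCLM.hasFDerivAt).add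
      (Complex.imCLM.hasFDerivAt.mul Complex.imCLM.hasFDerivAt)
  have h2 : (fun w : ℂ => w.re * w.re + w.im * w.im) = Complex.normSq := by
    funext w; simp [Complex.normSq_apply]
  rw [h2] at h1
  convert h1 using 1
  ext w
  simp [Dq]
  ring

lemma contDiff_q : ContDiff ℝ 2 Complex.normSq := by
  have h : ContDiff ℝ 2 (fun w : ℂ => w.re * w.re + w.im * w.im) :=
    ((Complex.reCLM.contDiff.mul Complex.reCLM.contDiff)).add
      ((Complex.imCLM.contDiff.mul Complex.imCLM.contDiff))
  have h2 : (fun w : ℂ => w.re * w.re + w.im * w.im) = Complex.normSq := by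
    funext w; simp [Complex.normSq_apply]
  rwa [h2] at h

noncomputable def DN (z : ℂ) : ℂ →L[ℝ] ℝ :=
  (z.re / Complex.normSq z) • Complex.reCLM + (z.im / Complex.normSq z) • Complex.imCLM

lemma Nrepr : (fun w : ℂ => Real.log (‖w‖)) =
    fun w => Real.log (Complex.normSq w) / 2 := by
  funext w; rw [Complex.norm_def, Real.log_sqrt (Complex.normSq_nonneg w)]

lemma qne {z : ℂ} (hz : z ≠ 0) : Complex.normSq z ≠ 0 := by
  simpa [Complex.normSq_eq_zero] using hz

lemma hasFDerivAt_N {z : ℂ} (hz : z ≠ 0) :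
    HasFDerivAt (fun w : ℂ => Real.log (‖w‖)) (DN z) z := by
  rw [Nrepr]
  have h1 : HasFDerivAt (fun w : ℂ => Real.log (Complex.normSq w))
      ((Complex.normSq z)⁻¹ • Dq z) z := (hasFDerivAt_q z).log (qne hz)
  have h2 := h1.const_mul (2⁻¹:ℝ)
  have h3 : (fun w : ℂ => Real.log (Complex.normSq w) / 2)
      = fun w : ℂ => 2⁻¹ * Real.log (Complex.normSq w) := by
    funext w; ring
  rw [h3]
  refine h2.congr_fderiv ?_
  ext w
  simp [DN, Dq]
  ring

lemma contDiffOn_N : ContDiffOn ℝ 2 (fun w : ℂ => Real.log (‖w‖)) {z : ℂ | z ≠ 0} := by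
  rw [Nrepr]
  intro z hz
  have h1 : ContDiffAt ℝ 2 (fun w : ℂ => Real.log (Complex.normSq w) / 2) z := by
    have := ((Real.contDiffAt_log.mpr (qne hz)).comp z contDiff_q.contDiffAt).div_const 2
    exact this
  exact h1.contDiffWithinAt

lemma fderiv_N_one {z : ℂ} (hz : z ≠ 0) :
    fderiv ℝ (fun w : ℂ => Real.log (‖w‖)) z 1 = z.re / Complex.normSq z := by
  rw [(hasFDerivAt_N hz).fderiv]; simp [DN]

lemma fderiv_N_I {z : ℂ} (hz : z ≠ 0) :
    fderiv ℝ (fun w : ℂ => Real.log (‖w‖)) z Complex.I = z.im / Complex.normSq z := by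
  rw [(hasFDerivAt_N hz).fderiv]; simp [DN]

lemma lap_N_zero {z : ℂ} (hz : z ≠ 0) : lap (fun w : ℂ => Real.log (‖w‖)) z = 0 := by
  have hopen : IsOpen {w : ℂ | w ≠ 0} := isOpen_compl_singleton
  have hev : ∀ᶠ w in nhds z, w ≠ 0 := hopen.eventually_mem hz
  have hevf1 : (fun w => fderiv ℝ (fun w : ℂ => Real.log (‖w‖)) w 1)
      =ᶠ[nhds z] fun w => w.re / Complex.normSq w := by
    filter_upwards [hev] with w hw; exact fderiv_N_one hw
  have hevfI : (fun w => fderiv ℝ (fun w : ℂ => Real.log (‖w‖)) w Complex.I)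
      =ᶠ[nhds z] fun w => w.im / Complex.normSq w := by
    filter_upwards [hev] with w hw; exact fderiv_N_I hw
  have hinv : HasFDerivAt (fun w : ℂ => (Complex.normSq w)⁻¹)
      ((-(Complex.normSq z ^ 2)⁻¹) • Dq z) z := by
    have := (hasDerivAt_inv (qne hz)).comp_hasFDerivAt z (hasFDerivAt_q z)
    exact this
  have hd1 : HasFDerivAt (fun w : ℂ => w.re / Complex.normSq w)
      (z.re • ((-(Complex.normSq z ^ 2)⁻¹) • Dq z) +
        (Complex.normSq z)⁻¹ • (Complex.reCLM : ℂ →L[ℝ] ℝ)) z := by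
    have := Complex.reCLM.hasFDerivAt (x := z) |>.mul hinv
    simpa [div_eq_mul_inv, Pi.mul_def] using this
  have hdI : HasFDerivAt (fun w : ℂ => w.im / Complex.normSq w)
      (z.im • ((-(Complex.normSq z ^ 2)⁻¹) • Dq z) +
        (Complex.normSq z)⁻¹ • (Complex.imCLM : ℂ →L[ℝ] ℝ)) z := by
    have := Complex.imCLM.hasFDerivAt (x := z) |>.mul hinv
    simpa [div_eq_mul_inv, Pi.mul_def] using this
  have e1 : fderiv ℝ (fun w => fderiv ℝ (fun w : ℂ => Real.log (‖w‖)) w 1) z 1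
      = (Complex.normSq z - 2 * z.re ^ 2) / Complex.normSq z ^ 2 := by
    rw [Filter.EventuallyEq.fderiv_eq hevf1, hd1.fderiv]
    simp [Dq]
    field_simp [qne hz]
    ring
  have eI : fderiv ℝ (fun w => fderiv ℝ (fun w : ℂ => Real.log (‖w‖)) w Complex.I) z
      Complex.I = (Complex.normSq z - 2 * z.im ^ 2) / Complex.normSq z ^ 2 := by
    rw [Filter.EventuallyEq.fderiv_eq hevfI, hdI.fderiv]
    simp [Dq]
    field_simp [qne hz]
    ring
  rw [lap, e1, eI, ← add_div]
  have h0 : Complex.normSq z - 2 * z.re ^ 2 + (Complex.normSq z - 2 * z.im ^ 2) = 0 := by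
    rw [Complex.normSq_apply]; ring
  rw [h0, zero_div]

lemma lap_congr {U : Set ℂ} (hU : IsOpen U) {z : ℂ} (hz : z ∈ U) {φ ψ : ℂ → ℝ}
    (h : ∀ w ∈ U, φ w = ψ w) : lap φ z = lap ψ z := by
  have hev : ∀ w ∈ U, fderiv ℝ φ w = fderiv ℝ ψ w := fun w hw =>
    Filter.EventuallyEq.fderiv_eq
      (by filter_upwards [hU.eventually_mem hw] with x hx; exact h x hx)
  have h1 : (fun w => fderiv ℝ φ w 1) =ᶠ[nhds z] fun w => fderiv ℝ ψ w 1 := by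
    filter_upwards [hU.eventually_mem hz] with w hw; rw [hev w hw]
  have hI : (fun w => fderiv ℝ φ w Complex.I) =ᶠ[nhds z] fun w => fderiv ℝ ψ w Complex.I := by
    filter_upwards [hU.eventually_mem hz] with w hw; rw [hev w hw]
  rw [lap, lap, h1.fderiv_eq, hI.fderiv_eq]

lemma lap_neg (A : ℂ → ℝ) (z : ℂ) : lap (fun w => -A w) z = -lap A z := by
  have h1 : (fun w => fderiv ℝ (fun x => -A x) w 1) = fun w => -(fderiv ℝ A w 1) := by
    funext w; rw [fderiv_fun_neg]; simp
  have hI : (fun w => fderiv ℝ (fun x => -A x) w Complex.I)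
      = fun w => -(fderiv ℝ A w Complex.I) := by
    funext w; rw [fderiv_fun_neg]; simp
  rw [lap, lap, h1, hI, fderiv_fun_neg, fderiv_fun_neg]
  simp
  ring

lemma lap_comb {U : Set ℂ} (hU : IsOpen U) {z : ℂ} (hz : z ∈ U) {A B : ℂ → ℝ}
    (hA : ContDiffOn ℝ 2 A U) (hB : ContDiffOn ℝ 2 B U) (s t C : ℝ) :
    lap (fun w => A w + s * B w + t * Complex.normSq w + C) z
      = lap A z + s * lap B z + t * 4 := by
  have hdA : ∀ w ∈ U, DifferentiableAt ℝ A w := fun w hw =>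
    (hA.contDiffAt (hU.mem_nhds hw)).differentiableAt (by norm_num)
  have hdB : ∀ w ∈ U, DifferentiableAt ℝ B w := fun w hw =>
    (hB.contDiffAt (hU.mem_nhds hw)).differentiableAt (by norm_num)
  have hfd : ∀ w ∈ U, fderiv ℝ (fun w => A w + s * B w + t * Complex.normSq w + C) w
      = fderiv ℝ A w + s • fderiv ℝ B w + t • Dq w := by
    intro w hw
    exact ((((hdA w hw).hasFDerivAt.add (((hdB w hw).hasFDerivAt).const_mul s)).add
      ((hasFDerivAt_q w).const_mul t)).add_const C).fderiv
  have ev1 : (fun w => fderiv ℝ (fun w => A w + s * B w + t * Complex.normSq w + C) w 1)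
      =ᶠ[nhds z] fun w => fderiv ℝ A w 1 + s * fderiv ℝ B w 1 + t * (2 * w.re) := by
    filter_upwards [hU.eventually_mem hz] with w hw
    rw [hfd w hw]; simp [Dq]
  have evI : (fun w => fderiv ℝ (fun w => A w + s * B w + t * Complex.normSq w + C) w Complex.I)
      =ᶠ[nhds z] fun w => fderiv ℝ A w Complex.I + s * fderiv ℝ B w Complex.I
        + t * (2 * w.im) := by
    filter_upwards [hU.eventually_mem hz] with w hw
    rw [hfd w hw]; simp [Dq]
  have hA' : ContDiffOn ℝ 1 (fun w => fderiv ℝ A w) U := hA.fderiv_of_isOpen hU (by norm_num)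
  have hB' : ContDiffOn ℝ 1 (fun w => fderiv ℝ B w) U := hB.fderiv_of_isOpen hU (by norm_num)
  have dA1 : ∀ v : ℂ, DifferentiableAt ℝ (fun w => fderiv ℝ A w v) z := fun v =>
    ((hA'.contDiffAt (hU.mem_nhds hz)).differentiableAt one_ne_zero).clm_apply
      (differentiableAt_const v)
  have dB1 : ∀ v : ℂ, DifferentiableAt ℝ (fun w => fderiv ℝ B w v) z := fun v =>
    ((hB'.contDiffAt (hU.mem_nhds hz)).differentiableAt one_ne_zero).clm_apply
      (differentiableAt_const v)
  have h2re : HasFDerivAt (fun w : ℂ => 2 * w.re) ((2:ℝ) • (Complex.reCLM : ℂ →L[ℝ] ℝ)) z :=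
    Complex.reCLM.hasFDerivAt.const_mul 2
  have h2im : HasFDerivAt (fun w : ℂ => 2 * w.im) ((2:ℝ) • (Complex.imCLM : ℂ →L[ℝ] ℝ)) z :=
    Complex.imCLM.hasFDerivAt.const_mul 2
  have e1 : fderiv ℝ (fun w => fderiv ℝ (fun w => A w + s * B w + t * Complex.normSq w + C) w 1)
        z 1
      = fderiv ℝ (fun w => fderiv ℝ A w 1) z 1 + s * fderiv ℝ (fun w => fderiv ℝ B w 1) z 1
        + t * 2 := by
    rw [Filter.EventuallyEq.fderiv_eq ev1]
    erw [(((dA1 1).hasFDerivAt.add (((dB1 1).hasFDerivAt).const_mul s)).add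
      (h2re.const_mul t)).fderiv]
    simp
  have eI : fderiv ℝ (fun w => fderiv ℝ (fun w => A w + s * B w + t * Complex.normSq w + C) w
        Complex.I) z Complex.I
      = fderiv ℝ (fun w => fderiv ℝ A w Complex.I) z Complex.I
        + s * fderiv ℝ (fun w => fderiv ℝ B w Complex.I) z Complex.I + t * 2 := by
    rw [Filter.EventuallyEq.fderiv_eq evI]
    erw [(((dA1 Complex.I).hasFDerivAt.add (((dB1 Complex.I).hasFDerivAt).const_mul s)).add
      (h2im.const_mul t)).fderiv]
    simp
  rw [lap, e1, eI, lap, lap]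
  ring

lemma hopf_alg (P hx hy : ℝ) (A B : ℂ)
    (h1 : P^2 * ‖A‖^2 + hx^2 = P^2*‖B‖^2 + hy^2)
    (h2 : P^2 * (A * (starRingEnd ℂ) B).re + hx*hy = 0) :
    (P:ℂ)^2 * ((A - Complex.I*B)/2) * ((starRingEnd ℂ) ((A + Complex.I*B)/2))
      = -(((hx:ℂ) - Complex.I*hy)/2)^2 := by
  rw [Complex.sq_norm, Complex.sq_norm, Complex.normSq_apply, Complex.normSq_apply] at h1
  rw [Complex.mul_re, Complex.conj_re, Complex.conj_im] at h2
  have key : (P:ℂ)^2 * ((A - Complex.I*B) * ((starRingEnd ℂ) (A + Complex.I*B)))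
      = -((hx:ℂ) - Complex.I*hy)^2 := by
    simp only [Complex.ext_iff, Complex.mul_re, Complex.mul_im, Complex.conj_re,
      Complex.conj_im, Complex.add_re, Complex.add_im, Complex.sub_re, Complex.sub_im,
      Complex.I_re, Complex.I_im, Complex.ofReal_re, Complex.ofReal_im, Complex.neg_re,
      Complex.neg_im, pow_two]
    constructor
    · linear_combination h1
    · linear_combination -2*h2
  calc (P:ℂ)^2 * ((A - Complex.I*B)/2) * ((starRingEnd ℂ) ((A + Complex.I*B)/2))
      = (P:ℂ)^2 * ((A - Complex.I*B) * ((starRingEnd ℂ) (A + Complex.I*B))) / 4 := by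
        rw [map_div₀, show (starRingEnd ℂ) 2 = 2 from by simp [Complex.ext_iff]]; ring
    _ = -((hx:ℂ) - Complex.I*hy)^2 / 4 := by rw [key]
    _ = -(((hx:ℂ) - Complex.I*hy)/2)^2 := by ring

lemma annulus_max {r S : ℝ} (hr : 0 < r) (hrS : r < S) {φ : ℂ → ℝ}
    (hcont : ContinuousOn φ {z : ℂ | r ≤ ‖z‖ ∧ ‖z‖ ≤ S})
    (hbd : ∀ z : ℂ, ‖z‖ = r ∨ ‖z‖ = S → φ z ≤ 0)
    (hC2 : ContDiffOn ℝ 2 φ (Ann r S))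
    (hharm : ∀ z ∈ Ann r S, lap φ z = 0) :
    ∀ z ∈ Ann r S, φ z ≤ 0 := by
  have hSpos : 0 < S := lt_trans hr hrS
  have hAnnOpen : IsOpen (Ann r S) := by
    have : Ann r S = {z : ℂ | r < ‖z‖} ∩ {z : ℂ | ‖z‖ < S} := rfl
    rw [this]
    exact (isOpen_lt continuous_const continuous_norm).inter
      (isOpen_lt continuous_norm continuous_const)
  set K : Set ℂ := {z : ℂ | r ≤ ‖z‖ ∧ ‖z‖ ≤ S} with hK
  have hAK : Ann r S ⊆ K := fun w hw => ⟨le_of_lt hw.1, le_of_lt hw.2⟩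
  have hKc : IsCompact K := by
    apply Metric.isCompact_of_isClosed_isBounded
    · have : K = (fun z : ℂ => ‖z‖) ⁻¹' (Set.Icc r S) := rfl
      rw [this]; exact isClosed_Icc.preimage continuous_norm
    · apply (Metric.isBounded_closedBall (x := (0:ℂ)) (r := S)).subset
      intro w hw
      simp only [Metric.mem_closedBall, Complex.dist_eq, sub_zero]
      exact hw.2
  have hKne : K.Nonempty := by
    refine ⟨(r : ℂ), ?_⟩
    simp only [hK, Set.mem_setOf_eq, Complex.norm_real, Real.norm_eq_abs, abs_of_pos hr]
    exact ⟨le_refl r, le_of_lt hrS⟩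
  intro z hz
  have hεbound : ∀ ε : ℝ, 0 < ε → φ z ≤ ε * S^2 := by
    intro ε hε
    set ψ : ℂ → ℝ := fun w => φ w + 0 * φ w + ε * Complex.normSq w + (-(ε * S^2)) with hψ
    have hψcont : ContinuousOn ψ K :=
      ((hcont.add (continuousOn_const.mul hcont)).add
        (continuousOn_const.mul contDiff_q.continuous.continuousOn)).add continuousOn_const
    have hψC2 : ContDiffOn ℝ 2 ψ (Ann r S) :=
      ((hC2.add (contDiffOn_const.mul hC2)).add
        (contDiffOn_const.mul (contDiff_q.contDiffOn))).add contDiffOn_const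
    have hψlap : ∀ w ∈ Ann r S, lap ψ w = ε * 4 := by
      intro w hw
      have := lap_comb hAnnOpen hw hC2 hC2 0 ε (-(ε * S^2))
      rw [hψ, this, hharm w hw]; ring
    obtain ⟨z₀, hz₀K, hmax⟩ := hKc.exists_isMaxOn hKne hψcont
    by_cases hz₀A : z₀ ∈ Ann r S
    · exfalso
      have hloc : IsLocalMax ψ z₀ :=
        hmax.isLocalMax (Filter.mem_of_superset (hAnnOpen.mem_nhds hz₀A) hAK)
      have hd1 := dir_second_nonpos hAnnOpen hz₀A hψC2 1 hloc
      have hdI := dir_second_nonpos hAnnOpen hz₀A hψC2 Complex.I hloc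
      have hlp := hψlap z₀ hz₀A
      rw [lap] at hlp
      linarith
    · have hz₀b : ‖z₀‖ = r ∨ ‖z₀‖ = S := by
        rcases hz₀K with ⟨h1', h2'⟩
        rcases lt_or_eq_of_le h1' with h | h
        · rcases lt_or_eq_of_le h2' with h' | h'
          · exact absurd ⟨h, h'⟩ hz₀A
          · right; exact h'
        · left; exact h.symm
      have hψz₀ : ψ z₀ ≤ 0 := by
        have hφ0 : φ z₀ ≤ 0 := hbd z₀ hz₀b
        have hns : Complex.normSq z₀ ≤ S^2 := by
          rw [← Complex.sq_norm]
          rcases hz₀b with h | h <;> rw [h] <;> nlinarith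
        simp only [hψ]; nlinarith
      have hle : ψ z ≤ ψ z₀ := hmax (hAK hz)
      have hq0 : 0 ≤ Complex.normSq z := Complex.normSq_nonneg z
      simp only [hψ] at hle hψz₀
      nlinarith [mul_nonneg hε.le hq0]
  by_contra hc
  push_neg at hc
  have hS2 : 0 < S^2 := by positivity
  have h2 := hεbound (φ z / (2 * S^2)) (by positivity)
  have h3 : φ z / (2 * S^2) * S^2 = φ z / 2 := by field_simp
  rw [h3] at h2
  linarith


lemma hmain_calc (b : ℝ) (z : ℂ) (hz : z ≠ 0) :
    (((b*(z.re/Complex.normSq z):ℝ):ℂ) - Complex.I*((b*(z.im/Complex.normSq z):ℝ):ℂ)) * z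
      = (b:ℂ) := by
  have hq : Complex.normSq z ≠ 0 := by simpa [Complex.normSq_eq_zero] using hz
  have h4 : z.re^2*z.im^2*2+z.re^4+z.im^4 ≠ 0 := by
    have h5 : z.re^2*z.im^2*2+z.re^4+z.im^4 = (Complex.normSq z)^2 := by
      rw [Complex.normSq_apply]; ring
    rw [h5]
    exact pow_ne_zero 2 hq
  push_cast
  rw [Complex.ext_iff]
  constructor
  · simp [Complex.mul_re, Complex.mul_im, Complex.div_re, Complex.div_im, Complex.normSq_apply,
      Complex.ofReal_re, Complex.ofReal_im]
    have hq' : z.re * z.re + z.im * z.im ≠ 0 := by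
      rwa [Complex.normSq_apply] at hq
    field_simp
    have hq'' : z.re ^ 2 + z.im ^ 2 ≠ 0 := by rw [pow_two, pow_two]; exact hq'
    rw [mul_div_assoc, div_self hq'', mul_one]
  · simp [Complex.mul_re, Complex.mul_im, Complex.div_re, Complex.div_im, Complex.normSq_apply,
      Complex.ofReal_re, Complex.ofReal_im]
    ring

end Aux

/-- the ℘-version of Statement 5, for a doubly connected minimal graph in
(Ω,℘) × ℝ: h(z) = h₀ + d/2 + (d/log R²) log|z|, the ℘-Hopf differential of f is c/z²
with c = -d²/(4 (log R²)²) < 0, and u(w) = h₀ + d/2 + 2√(-c) log|f⁻¹(w)|. -/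
theorem stmt6 (R d h₀ : ℝ) (hR : 1 < R) (hd : 0 < d) (Ω : Set ℂ) (hΩ : IsOpen Ω)
    (p : ℂ → ℝ) (hps : ContDiffOn ℝ (⊤ : ℕ∞) p Ω) (hpp : ∀ w ∈ Ω, 0 < p w)
    (u : ℂ → ℝ) (hu : ContDiffOn ℝ 2 u Ω)
    (f g : ℂ → ℂ) (hf : ContDiffOn ℝ 2 f (Ann (1/R) R))
    (hfharm : PHarmOn p f (Ann (1/R) R))
    (hbij : Set.BijOn f (Ann (1/R) R) Ω)
    (hfc : ContinuousOn f (Ann (1/R) R)) (hgc : ContinuousOn g Ω)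
    (hg : ∀ z ∈ Ann (1/R) R, g (f z) = z) (hg' : ∀ w ∈ Ω, f (g w) = w)
    (hlap : ∀ z ∈ Ann (1/R) R, lap (fun w => u (f w)) z = 0)
    (hconf1 : ∀ z ∈ Ann (1/R) R,
      (p (f z)) ^ 2 * ‖fderiv ℝ f z 1‖ ^ 2 +
        (fderiv ℝ (fun w => u (f w)) z 1) ^ 2 =
      (p (f z)) ^ 2 * ‖fderiv ℝ f z Complex.I‖ ^ 2 +
        (fderiv ℝ (fun w => u (f w)) z Complex.I) ^ 2)
    (hconf2 : ∀ z ∈ Ann (1/R) R,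
      (p (f z)) ^ 2 * (fderiv ℝ f z 1 * (starRingEnd ℂ) (fderiv ℝ f z Complex.I)).re +
      fderiv ℝ (fun w => u (f w)) z 1 * fderiv ℝ (fun w => u (f w)) z Complex.I = 0)
    (H : ℂ → ℝ)
    (hHcont : ContinuousOn H {z : ℂ | 1/R ≤ ‖z‖ ∧ ‖z‖ ≤ R})
    (hHeq : ∀ z ∈ Ann (1/R) R, H z = u (f z))
    (hHin : ∀ z : ℂ, ‖z‖ = 1/R → H z = h₀)
    (hHout : ∀ z : ℂ, ‖z‖ = R → H z = h₀ + d) :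
    (∀ z ∈ Ann (1/R) R,
        u (f z) = h₀ + d / 2 + (d / Real.log (R ^ 2)) * Real.log (‖z‖)) ∧
    (∀ z ∈ Ann (1/R) R,
        (p (f z) : ℂ) ^ 2 * wz f z * (starRingEnd ℂ) (wzbar f z) =
          ((-d ^ 2 / (4 * (Real.log (R ^ 2)) ^ 2) : ℝ) : ℂ) / z ^ 2) ∧
    (-d ^ 2 / (4 * (Real.log (R ^ 2)) ^ 2) : ℝ) < 0 ∧
    (∀ w ∈ Ω, u w = h₀ + d / 2 +
        2 * Real.sqrt (-(-d ^ 2 / (4 * (Real.log (R ^ 2)) ^ 2))) *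
          Real.log (‖g w‖)) := by
  have hR0 : (0:ℝ) < R := lt_trans one_pos hR
  have hr : (0:ℝ) < 1/R := by positivity
  have hrS : 1/R < R := by rw [div_lt_iff₀ hR0]; nlinarith
  have hlogR : 0 < Real.log R := Real.log_pos hR
  have hLeq : Real.log (R^2) = 2 * Real.log R := by
    rw [Real.log_pow]; push_cast; ring
  have hL : 0 < Real.log (R^2) := by rw [hLeq]; linarith
  set L := Real.log (R^2) with hLdef
  set b := d / L with hbdef
  have hb2 : b * Real.log R = d / 2 := by
    rw [hbdef, hLeq]; field_simp
  have hAnnOpen : IsOpen (Ann (1/R) R) := by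
    have he : Ann (1/R) R = {z : ℂ | 1/R < ‖z‖} ∩ {z : ℂ | ‖z‖ < R} := rfl
    rw [he]
    exact (isOpen_lt continuous_const continuous_norm).inter
      (isOpen_lt continuous_norm continuous_const)
  have hnz : ∀ z ∈ Ann (1/R) R, z ≠ 0 := by
    intro z hz h0
    have h1 := hz.1
    rw [h0] at h1
    simp at h1
    linarith
  have hmaps := hbij.mapsTo
  have hh : ContDiffOn ℝ 2 (fun z => u (f z)) (Ann (1/R) R) := hu.comp hf hmaps
  have hNC2 : ContDiffOn ℝ 2 (fun w : ℂ => Real.log (‖w‖)) (Ann (1/R) R) :=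
    contDiffOn_N.mono (fun z hz => hnz z hz)
  have hlogcont : ContinuousOn (fun z : ℂ => Real.log (‖z‖))
      {z : ℂ | 1/R ≤ ‖z‖ ∧ ‖z‖ ≤ R} := by
    intro z hz
    exact ((Real.continuousAt_log (ne_of_gt (lt_of_lt_of_le hr hz.1))).comp
      continuous_norm.continuousAt).continuousWithinAt
  have part1 : ∀ z ∈ Ann (1/R) R, u (f z) = h₀ + d/2 + b * Real.log (‖z‖) := by
    have hφbd : ∀ z : ℂ, ‖z‖ = 1/R ∨ ‖z‖ = R →
        H z - (h₀ + d/2 + b * Real.log (‖z‖)) = 0 := by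
      intro z hzb
      rcases hzb with h | h
      · rw [hHin z h, h, one_div, Real.log_inv]
        linarith [hb2]
      · rw [hHout z h, h]
        linarith [hb2]
    have heqp : ∀ w ∈ Ann (1/R) R, (H w - (h₀ + d/2 + b * Real.log (‖w‖)))
        = u (f w) + (-b) * Real.log (‖w‖) + 0 * Complex.normSq w
          + (-(h₀ + d/2)) := by
      intro w hw; rw [hHeq w hw]; ring
    have heqn : ∀ w ∈ Ann (1/R) R, ((h₀ + d/2 + b * Real.log (‖w‖)) - H w)
        = -u (f w) + b * Real.log (‖w‖) + 0 * Complex.normSq w + (h₀ + d/2) := by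
      intro w hw; rw [hHeq w hw]; ring
    have hposC2 : ContDiffOn ℝ 2
        (fun z => H z - (h₀ + d/2 + b * Real.log (‖z‖))) (Ann (1/R) R) := by
      have base : ContDiffOn ℝ 2 (fun z => u (f z) + (-b) * Real.log (‖z‖)
          + 0 * Complex.normSq z + (-(h₀ + d/2))) (Ann (1/R) R) :=
        ((hh.add (contDiffOn_const.mul hNC2)).add
          (contDiffOn_const.mul contDiff_q.contDiffOn)).add contDiffOn_const
      exact base.congr heqp
    have hnegC2 : ContDiffOn ℝ 2
        (fun z => (h₀ + d/2 + b * Real.log (‖z‖)) - H z) (Ann (1/R) R) := by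
      have base : ContDiffOn ℝ 2 (fun z => -u (f z) + b * Real.log (‖z‖)
          + 0 * Complex.normSq z + (h₀ + d/2)) (Ann (1/R) R) :=
        ((hh.neg.add (contDiffOn_const.mul hNC2)).add
          (contDiffOn_const.mul contDiff_q.contDiffOn)).add contDiffOn_const
      exact base.congr heqn
    have hposlap : ∀ z ∈ Ann (1/R) R,
        lap (fun z => H z - (h₀ + d/2 + b * Real.log (‖z‖))) z = 0 := by
      intro z hz
      rw [lap_congr hAnnOpen hz heqp,
        lap_comb hAnnOpen hz hh hNC2 (-b) 0 (-(h₀ + d/2)), hlap z hz,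
        lap_N_zero (hnz z hz)]
      ring
    have hneglap : ∀ z ∈ Ann (1/R) R,
        lap (fun z => (h₀ + d/2 + b * Real.log (‖z‖)) - H z) z = 0 := by
      intro z hz
      rw [lap_congr hAnnOpen hz heqn,
        lap_comb hAnnOpen hz hh.neg hNC2 b 0 (h₀ + d/2), lap_N_zero (hnz z hz)]
      have e := lap_neg (fun z => u (f z)) z
      rw [hlap z hz] at e
      rw [e]
      ring
    have hpos := annulus_max hr hrS
      (φ := fun z => H z - (h₀ + d/2 + b * Real.log (‖z‖)))
      (hHcont.sub (continuousOn_const.add (continuousOn_const.mul hlogcont)))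
      (fun z hzb => le_of_eq (hφbd z hzb)) hposC2 hposlap
    have hneg := annulus_max hr hrS
      (φ := fun z => (h₀ + d/2 + b * Real.log (‖z‖)) - H z)
      ((continuousOn_const.add (continuousOn_const.mul hlogcont)).sub hHcont)
      (fun z hzb => le_of_eq (by linarith [hφbd z hzb])) hnegC2 hneglap
    intro z hz
    have h1 := hpos z hz
    have h2 := hneg z hz
    rw [← hHeq z hz]
    linarith
  refine ⟨part1, ?_, ?_, ?_⟩
  · intro z hz
    have znz := hnz z hz
    have hev : (fun w => u (f w)) =ᶠ[nhds z]
        (fun w => h₀ + d/2 + b * Real.log (‖w‖)) := by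
      filter_upwards [hAnnOpen.eventually_mem hz] with w hw
      exact part1 w hw
    have hrad : HasFDerivAt (fun w : ℂ => h₀ + d/2 + b * Real.log (‖w‖))
        (b • DN z) z := (((hasFDerivAt_N znz).const_mul b).const_add (h₀ + d/2))
    have hfd : fderiv ℝ (fun w => u (f w)) z = b • DN z := by
      rw [hev.fderiv_eq]; exact hrad.fderiv
    have hx1 : fderiv ℝ (fun w => u (f w)) z 1 = b * (z.re / Complex.normSq z) := by
      rw [hfd]; simp [DN]
    have hxI : fderiv ℝ (fun w => u (f w)) z Complex.I = b * (z.im / Complex.normSq z) := by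
      rw [hfd]; simp [DN]
    have h1 := hconf1 z hz
    have h2 := hconf2 z hz
    rw [hx1, hxI] at h1 h2
    have key := hopf_alg (p (f z)) _ _ (fderiv ℝ f z 1) (fderiv ℝ f z Complex.I) h1 h2
    rw [show wz f z = (fderiv ℝ f z 1 - Complex.I * fderiv ℝ f z Complex.I) / 2 from rfl,
      show wzbar f z = (fderiv ℝ f z 1 + Complex.I * fderiv ℝ f z Complex.I) / 2 from rfl,
      key]
    have hm := hmain_calc b z znz
    have hX : ((b*(z.re/Complex.normSq z):ℝ):ℂ)
        - Complex.I*((b*(z.im/Complex.normSq z):ℝ):ℂ) = (b:ℂ)/z := by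
      rw [eq_div_iff znz]; exact hm
    rw [hX]
    have hbc : (b:ℂ) = (d:ℂ)/(L:ℂ) := by rw [hbdef]; push_cast; ring
    rw [hbc]
    have hLc0 : (L:ℂ) ≠ 0 := by
      exact_mod_cast ne_of_gt hL
    push_cast
    field_simp
    ring
  · have h1 : (0:ℝ) < d^2/(4*L^2) := by positivity
    rw [show -d^2/(4*L^2) = -(d^2/(4*L^2)) from by ring]
    linarith
  · intro w hw
    obtain ⟨z, hzA, hfz⟩ := hbij.surjOn hw
    have hgw : g w = z := by rw [← hfz, hg z hzA]
    rw [hgw, ← hfz, part1 z hzA]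
    rw [show -(-d^2/(4*L^2)) = (d/(2*L))^2 from by field_simp; ring]
    rw [Real.sqrt_sq (by positivity : (0:ℝ) ≤ d/(2*L))]
    rw [hbdef]
    have h2 : 2 * (d/(2*L)) = d / L := by field_simp
    rw [h2]
end
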